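/- arXiv:1209.2932 — 6 statements merged into one kernel-verified Lean document; each statement's English description precedes it below -/
import Mathlib

section
/- Let b₁₂, b₁₃, b₂₁, b₂₃ ∈ ℝ³ be unit vectors with b₁₂₃ := b₁₂ × b₁₃ ≠ 0 and b₂₁₃ := b₂₁ × b₂₃ ≠ 0. Suppose Q, Q′ ∈ SO(3) both satisfy the two line-of-sight constraints b₁₂ = −Qᵀ b₂₁ and b₁₂₃/‖b₁₂₃‖ = −Qᵀ b₂₁₃/‖b₂₁₃‖ (and likewise with Q replaced by Q′). Then Q = Q′; i.e., the relative attitude is uniquely determined by the four line-of-sight measurements. -/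
/-! Qᵀ and Q′ᵀ agree on b₂₁ and on b₂₁₃, and rotations commute with the cross product, so they
also agree on b₂₁ × b₂₁₃. As b₂₁₃ = b₂₁ × b₂₃ ≠ 0 is orthogonal to b₂₁, Lagrange's identity gives
b₂₁ × b₂₁₃ ≠ 0; then b₂₁ × b₂₁₃, b₂₁, b₂₁₃ have determinant ‖b₂₁ × b₂₁₃‖² ≠ 0 and form a basis. -/

noncomputable section
open Matrix

/-- Vectors in ℝ³ with the Euclidean norm. -/
abbrev V3 : Type := EuclideanSpace ℝ (Fin 3)

/-- Real 3×3 matrices. -/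
abbrev M3 : Type := Matrix (Fin 3) (Fin 3) ℝ

/-- The special orthogonal group SO(3): RᵀR = I and det R = 1. -/
def SO3 (R : M3) : Prop := Rᵀ * R = 1 ∧ R.det = 1

/-- Action of a matrix on a vector. -/
def matVec (A : M3) (v : V3) : V3 := WithLp.toLp 2 (A.mulVec v)

/-- Cross product on ℝ³. -/
def cross3 (u v : V3) : V3 :=
  WithLp.toLp 2 ![u 1 * v 2 - u 2 * v 1, u 2 * v 0 - u 0 * v 2, u 0 * v 1 - u 1 * v 0]

/-- The hat map: x̂ y = x × y. -/
def hat (x : V3) : M3 :=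
  !![0, -x 2, x 1; x 2, 0, -x 0; -x 1, x 0, 0]

/-- The vee map, inverse of the hat map on skew-symmetric matrices. -/
def vee (A : M3) : V3 := WithLp.toLp 2 ![A 2 1, A 0 2, A 1 0]

/-- Dot product on ℝ³. -/
def dot3 (u v : V3) : ℝ := u 0 * v 0 + u 1 * v 1 + u 2 * v 2

attribute [local instance] Matrix.normedAddCommGroup Matrix.normedSpace

namespace Matrix

section CommRing

variable {R : Type*} [CommRing R]

theorem transpose_mulVec_cross_mulVec (A : Matrix (Fin 3) (Fin 3) R) (u v : Fin 3 → R) :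
    Aᵀ *ᵥ ((A *ᵥ u) ⨯₃ (A *ᵥ v)) = A.det • (u ⨯₃ v) := by
  ext i
  fin_cases i <;>
    simp only [Fin.zero_eta, Fin.mk_one, Fin.reduceFinMk, Fin.isValue, mulVec, dotProduct,
      transpose_apply, cross_apply, Fin.sum_univ_three, cons_val_zero, cons_val_one, cons_val,
      det_fin_three, Pi.smul_apply, smul_eq_mul] <;> ring

theorem mulVec_cross_of_mem_specialOrthogonalGroup {A : Matrix (Fin 3) (Fin 3) R}
    (hA : A ∈ specialOrthogonalGroup (Fin 3) R) (u v : Fin 3 → R) :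
    A *ᵥ (u ⨯₃ v) = (A *ᵥ u) ⨯₃ (A *ᵥ v) := by
  obtain ⟨hAAt, hdet⟩ := mem_specialOrthogonalGroup_iff.mp hA
  rw [mem_orthogonalGroup_iff] at hAAt
  calc A *ᵥ (u ⨯₃ v) = A *ᵥ (Aᵀ *ᵥ ((A *ᵥ u) ⨯₃ (A *ᵥ v))) := by
        rw [transpose_mulVec_cross_mulVec, hdet, one_smul]
    _ = (A *ᵥ u) ⨯₃ (A *ᵥ v) := by rw [mulVec_mulVec, hAAt, one_mulVec]

end CommRing

theorem eq_of_mulVec_eq_of_cross_dot_ne_zero {K m : Type*} [Field K] {A B : Matrix m (Fin 3) K}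
    {u v : Fin 3 → K} (huv : (u ⨯₃ v) ⬝ᵥ (u ⨯₃ v) ≠ 0)
    (hu : A *ᵥ u = B *ᵥ u) (hv : A *ᵥ v = B *ᵥ v) (hw : A *ᵥ (u ⨯₃ v) = B *ᵥ (u ⨯₃ v)) :
    A = B := by
  set M : Matrix (Fin 3) (Fin 3) K := ![u ⨯₃ v, u, v]
  have hM : IsUnit Mᵀ.det := by
    rw [det_transpose, ← triple_product_eq_det]
    exact huv.isUnit
  have hcols : A * Mᵀ = B * Mᵀ := by
    ext i j
    have hj : A *ᵥ M j = B *ᵥ M j := by fin_cases j <;> assumption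
    simpa [mulVec, dotProduct, mul_apply] using congrFun hj i
  calc A = A * Mᵀ * Mᵀ⁻¹ := (mul_nonsing_inv_cancel_right _ _ hM).symm
    _ = B * Mᵀ * Mᵀ⁻¹ := by rw [hcols]
    _ = B := mul_nonsing_inv_cancel_right _ _ hM

end Matrix

theorem cross_cross_self_ne_zero {K : Type*} [Field K] [LinearOrder K] [IsStrictOrderedRing K]
    {a c : Fin 3 → K} (h : a ⨯₃ c ≠ 0) : a ⨯₃ (a ⨯₃ c) ≠ 0 := by
  have ha : a ≠ 0 := by rintro rfl; simp at h
  refine dotProduct_self_eq_zero.not.mp ?_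
  rw [cross_dot_cross, dot_self_cross, zero_mul, sub_zero]
  exact mul_ne_zero (dotProduct_self_eq_zero.not.mpr ha) (dotProduct_self_eq_zero.not.mpr h)

theorem SO3.transpose_mem_specialOrthogonalGroup {Q : M3} (hQ : SO3 Q) :
    Qᵀ ∈ specialOrthogonalGroup (Fin 3) ℝ :=
  mem_specialOrthogonalGroup_iff.mpr
    ⟨(mem_orthogonalGroup_iff _ _).mpr (by rw [transpose_transpose]; exact hQ.1),
      by rw [det_transpose, hQ.2]⟩

theorem ofLp_cross3 (u v : V3) : (cross3 u v).ofLp = u.ofLp ⨯₃ v.ofLp := by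
  ext i
  fin_cases i <;> simp [cross3, cross_apply]

theorem relative_attitude_unique_general
    (b₁₂ b₂₁ b₂₃ : V3)
    (b₁₂₃ b₂₁₃ : V3) (hb₂₁₃ : b₂₁₃ = cross3 b₂₁ b₂₃)
    (h₂ : b₂₁₃ ≠ 0)
    (Q Q' : M3) (hQ : SO3 Q) (hQ' : SO3 Q')
    (hQa : b₁₂ = -matVec Qᵀ b₂₁)
    (hQb : ‖b₁₂₃‖⁻¹ • b₁₂₃ = -(‖b₂₁₃‖⁻¹ • matVec Qᵀ b₂₁₃))
    (hQa' : b₁₂ = -matVec Q'ᵀ b₂₁)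
    (hQb' : ‖b₁₂₃‖⁻¹ • b₁₂₃ = -(‖b₂₁₃‖⁻¹ • matVec Q'ᵀ b₂₁₃)) :
    Q = Q' := by
  have ha : Qᵀ *ᵥ b₂₁ = Q'ᵀ *ᵥ b₂₁ :=
    congrArg WithLp.ofLp (neg_injective (hQa.symm.trans hQa'))
  have hb : Qᵀ *ᵥ b₂₁₃ = Q'ᵀ *ᵥ b₂₁₃ :=
    congrArg WithLp.ofLp <| smul_right_injective V3 (inv_ne_zero (norm_ne_zero_iff.mpr h₂))
      (neg_injective (hQb.symm.trans hQb'))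
  have hdet : (b₂₁.ofLp ⨯₃ b₂₁₃.ofLp) ⬝ᵥ (b₂₁.ofLp ⨯₃ b₂₁₃.ofLp) ≠ 0 := by
    rw [hb₂₁₃, ofLp_cross3, Ne, dotProduct_self_eq_zero]
    refine cross_cross_self_ne_zero ?_
    rwa [← ofLp_cross3, ← hb₂₁₃, Ne, WithLp.ofLp_eq_zero]
  refine transpose_injective (eq_of_mulVec_eq_of_cross_dot_ne_zero hdet ha hb ?_)
  rw [mulVec_cross_of_mem_specialOrthogonalGroup hQ.transpose_mem_specialOrthogonalGroup,
    mulVec_cross_of_mem_specialOrthogonalGroup hQ'.transpose_mem_specialOrthogonalGroup, ha, hb]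

/-- the relative attitude is uniquely determined by the two
line-of-sight constraints. -/
theorem relative_attitude_unique
    (b₁₂ b₁₃ b₂₁ b₂₃ : V3)
    (hb₁₂ : ‖b₁₂‖ = 1) (hb₁₃ : ‖b₁₃‖ = 1) (hb₂₁ : ‖b₂₁‖ = 1) (hb₂₃ : ‖b₂₃‖ = 1)
    (b₁₂₃ b₂₁₃ : V3) (hb₁₂₃ : b₁₂₃ = cross3 b₁₂ b₁₃) (hb₂₁₃ : b₂₁₃ = cross3 b₂₁ b₂₃)
    (h₁ : b₁₂₃ ≠ 0) (h₂ : b₂₁₃ ≠ 0)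
    (Q Q' : M3) (hQ : SO3 Q) (hQ' : SO3 Q')
    (hQa : b₁₂ = -matVec Qᵀ b₂₁)
    (hQb : ‖b₁₂₃‖⁻¹ • b₁₂₃ = -(‖b₂₁₃‖⁻¹ • matVec Qᵀ b₂₁₃))
    (hQa' : b₁₂ = -matVec Q'ᵀ b₂₁)
    (hQb' : ‖b₁₂₃‖⁻¹ • b₁₂₃ = -(‖b₂₁₃‖⁻¹ • matVec Q'ᵀ b₂₁₃)) :
    Q = Q' :=
  relative_attitude_unique_general b₁₂ b₂₁ b₂₃ b₁₂₃ b₂₁₃ hb₂₁₃ h₂ Q Q' hQ hQ' hQa hQb hQa' hQb'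
end
end

section
/- With the configuration error vectors defined from the line-of-sight measurements and the desired relative attitude, one has e₁₂ = −Q^d₂₁ e₂₁, and consequently ‖e₁₂‖ = ‖e₂₁‖. -/
noncomputable section
open Matrix

attribute [local instance] Matrix.normedAddCommGroup Matrix.normedSpace

/-! The cofactor identity `(A u) × (A v) = adj(A)ᵀ (u × v)` together with `adj Q = Qᵀ` for
`Q ∈ SO(3)` shows that rotations commute with the cross product. Hence
`Qᵀ ((Q x) × y) = x × (Qᵀ y) = -((Qᵀ y) × x)`, which maps each summand of `e₂₁` under `Qᵀ` to minus
the corresponding summand of `e₁₂`; the norm identity follows because `Qᵀ` is an isometry. -/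

lemma Matrix.cross_mulVec_mulVec {R : Type*} [CommRing R] (A : Matrix (Fin 3) (Fin 3) R)
    (u v : Fin 3 → R) : (A *ᵥ u) ⨯₃ (A *ᵥ v) = A.adjugateᵀ *ᵥ (u ⨯₃ v) := by
  ext i
  fin_cases i <;>
    simp [cross_apply, adjugate_fin_three, mulVec, dotProduct, Fin.sum_univ_three] <;> ring

lemma Matrix.adjugate_eq_transpose {R n : Type*} [CommRing R] [Fintype n] [DecidableEq n]
    {Q : Matrix n n R} (hQ : Qᵀ * Q = 1) (hdet : Q.det = 1) : Q.adjugate = Qᵀ := by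
  rw [← inv_eq_left_inv hQ, inv_def, hdet, Ring.inverse_one, one_smul]

lemma cross3_eq (u v : V3) : cross3 u v = WithLp.toLp 2 (u.ofLp ⨯₃ v.ofLp) := by
  ext i; fin_cases i <;> rfl

lemma cross3_anticomm (u v : V3) : cross3 u v = -cross3 v u := by
  rw [cross3_eq, cross3_eq, ← cross_anticomm]; rfl

lemma matVec_add (A : M3) (u v : V3) : matVec A (u + v) = matVec A u + matVec A v :=
  map_add (toEuclideanLin A) u v

lemma matVec_smul (A : M3) (c : ℝ) (v : V3) : matVec A (c • v) = c • matVec A v :=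
  map_smul (toEuclideanLin A) c v

lemma matVec_transpose_matVec {Q : M3} (hQ : Qᵀ * Q = 1) (x : V3) :
    matVec Qᵀ (matVec Q x) = x := by
  simp [matVec, mulVec_mulVec, hQ]

lemma norm_matVec {Q : M3} (hQ : Qᵀ * Q = 1) (x : V3) : ‖matVec Q x‖ = ‖x‖ := by
  rw [← sq_eq_sq₀ (norm_nonneg _) (norm_nonneg _), ← real_inner_self_eq_norm_sq,
    ← real_inner_self_eq_norm_sq, EuclideanSpace.inner_eq_star_dotProduct,
    EuclideanSpace.inner_eq_star_dotProduct]
  simp only [matVec, star_trivial]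
  rw [dotProduct_mulVec, ← mulVec_transpose, mulVec_mulVec, hQ, one_mulVec]

namespace SO3

variable {Q : M3}

lemma transpose (hQ : SO3 Q) : SO3 Qᵀ :=
  ⟨by rw [transpose_transpose]; exact mul_eq_one_comm.mp hQ.1, by rw [det_transpose]; exact hQ.2⟩

lemma cross3_matVec (hQ : SO3 Q) (u v : V3) :
    cross3 (matVec Q u) (matVec Q v) = matVec Q (cross3 u v) := by
  simp only [cross3_eq, matVec, cross_mulVec_mulVec, adjugate_eq_transpose hQ.1 hQ.2,
    transpose_transpose]

lemma matVec_transpose_cross3 (hQ : SO3 Q) (x y : V3) :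
    matVec Qᵀ (cross3 (matVec Q x) y) = -cross3 (matVec Qᵀ y) x := by
  rw [← hQ.transpose.cross3_matVec, matVec_transpose_matVec hQ.1, cross3_anticomm]

end SO3

theorem error_vector_relation_general
    (b₁₂ b₂₁ : V3)
    (b₁₂₃ b₂₁₃ : V3)
    (a₁₂ : ℝ)
    (Qd₁₂ Qd₂₁ : M3) (hQd : SO3 Qd₁₂) (hQd₂₁ : Qd₂₁ = Qd₁₂ᵀ)
    (kα kβ : ℝ)
    (eα₁₂ eα₂₁ eβ₁₂ eβ₂₁ e₁₂ e₂₁ : V3)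
    (heα₁₂ : eα₁₂ = cross3 (matVec Qd₂₁ b₂₁) b₁₂)
    (heα₂₁ : eα₂₁ = cross3 (matVec Qd₁₂ b₁₂) b₂₁)
    (heβ₁₂ : eβ₁₂ = a₁₂⁻¹ • cross3 (matVec Qd₂₁ b₂₁₃) b₁₂₃)
    (heβ₂₁ : eβ₂₁ = a₁₂⁻¹ • cross3 (matVec Qd₁₂ b₁₂₃) b₂₁₃)
    (he₁₂ : e₁₂ = kα • eα₁₂ + kβ • eβ₁₂)
    (he₂₁ : e₂₁ = kα • eα₂₁ + kβ • eβ₂₁) :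
    e₁₂ = -matVec Qd₂₁ e₂₁ ∧ ‖e₁₂‖ = ‖e₂₁‖ := by
  subst hQd₂₁
  have hα : matVec Qd₁₂ᵀ eα₂₁ = -eα₁₂ := by
    rw [heα₂₁, heα₁₂, hQd.matVec_transpose_cross3]
  have hβ : matVec Qd₁₂ᵀ eβ₂₁ = -eβ₁₂ := by
    rw [heβ₂₁, heβ₁₂, matVec_smul, hQd.matVec_transpose_cross3, smul_neg]
  have hrel : e₁₂ = -matVec Qd₁₂ᵀ e₂₁ := by
    rw [he₁₂, he₂₁, matVec_add, matVec_smul, matVec_smul, hα, hβ]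
    module
  exact ⟨hrel, by rw [hrel, norm_neg, norm_matVec hQd.transpose.1]⟩

/-- e₁₂ = −Q^d₂₁ e₂₁ and ‖e₁₂‖ = ‖e₂₁‖. -/
theorem error_vector_relation
    (b₁₂ b₁₃ b₂₁ b₂₃ : V3)
    (hb₁₂ : ‖b₁₂‖ = 1) (hb₁₃ : ‖b₁₃‖ = 1) (hb₂₁ : ‖b₂₁‖ = 1) (hb₂₃ : ‖b₂₃‖ = 1)
    (b₁₂₃ b₂₁₃ : V3) (hb₁₂₃ : b₁₂₃ = cross3 b₁₂ b₁₃) (hb₂₁₃ : b₂₁₃ = cross3 b₂₁ b₂₃)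
    (a₁₂ : ℝ) (ha₁₂ : a₁₂ = ‖b₂₁₃‖ * ‖b₁₂₃‖) (ha : a₁₂ ≠ 0)
    (Qd₁₂ Qd₂₁ : M3) (hQd : SO3 Qd₁₂) (hQd₂₁ : Qd₂₁ = Qd₁₂ᵀ)
    (kα kβ : ℝ) (hkα : 0 < kα) (hkβ : 0 < kβ)
    (eα₁₂ eα₂₁ eβ₁₂ eβ₂₁ e₁₂ e₂₁ : V3)
    (heα₁₂ : eα₁₂ = cross3 (matVec Qd₂₁ b₂₁) b₁₂)
    (heα₂₁ : eα₂₁ = cross3 (matVec Qd₁₂ b₁₂) b₂₁)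
    (heβ₁₂ : eβ₁₂ = a₁₂⁻¹ • cross3 (matVec Qd₂₁ b₂₁₃) b₁₂₃)
    (heβ₂₁ : eβ₂₁ = a₁₂⁻¹ • cross3 (matVec Qd₁₂ b₁₂₃) b₂₁₃)
    (he₁₂ : e₁₂ = kα • eα₁₂ + kβ • eβ₁₂)
    (he₂₁ : e₂₁ = kα • eα₂₁ + kβ • eβ₂₁) :
    e₁₂ = -matVec Qd₂₁ e₂₁ ∧ ‖e₁₂‖ = ‖e₂₁‖ :=
  error_vector_relation_general b₁₂ b₂₁ b₁₂₃ b₂₁₃ a₁₂ Qd₁₂ Qd₂₁ hQd hQd₂₁ kα kβ eα₁₂ eα₂₁ eβ₁₂ eβ₂₁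
    e₁₂ e₂₁ heα₁₂ heα₂₁ heβ₁₂ heβ₂₁ he₁₂ he₂₁
end
end

section
/- Under the stated geometric assumptions, let U ∈ SO(3) be the matrix with columns s₁₂, s₁₂₃/‖s₁₂₃‖, (s₁₂ × s₁₂₃)/‖s₁₂ × s₁₂₃‖, let G = diag(kᵅ, kᵝ, 0), and set F = 2G and P = Uᵀ R₁ Q^d₂₁ R₂ᵀ U ∈ SO(3). Then the configuration error function satisfies Ψ₁₂ = (1/2) tr[F(I − P)], and the vector e_P = (1/2)(FP − PᵀF)^∨ satisfies e_P = Uᵀ R₂ Q^d₁₂ e₁₂; in particular ‖e_P‖ = ‖e₁₂‖. -/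
/-!
Write `u₀ = s₁₂`, `u₁ = s₁₂₃ / ‖s₁₂₃‖` for the first two columns of `U` and
`M = R₁ Q^d₂₁ R₂ᵀ`, so that `P = Uᵀ M U`. Since `F` is diagonal, `Pᵢᵢ = uᵢ · M uᵢ` is all the
trace sees, and `½ (FP - PᵀF)^∨ = Σ kᵢ (Pᵀ eᵢ) × eᵢ = Uᵀ Σ kᵢ (Mᵀ uᵢ) × uᵢ`.
Each `uᵢ` is seen from body 1 as `c₁ = R₁ᵀ uᵢ` and from body 2 as `R₂ᵀ uᵢ = -c₂`, where
`(c₁, c₂)` is `(b₁₂, b₂₁)`, resp. the normalised `(b₁₂₃, b₂₁₃)` thanks to the opposite normals.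
Then `uᵢ · M uᵢ = -c₂ · Q^d₁₂ c₁` and, as rotations commute with the cross product,
`(Mᵀ uᵢ) × uᵢ = R₂ Q^d₁₂ ((Q^d₂₁ c₂) × c₁)`; the normalisations produce the factor `1 / a₁₂`.
-/

noncomputable section
open Matrix

attribute [local instance] Matrix.normedAddCommGroup Matrix.normedSpace

namespace SO3

variable {R : M3}

lemma mul_transpose_self (h : SO3 R) : R * Rᵀ = 1 :=
  mul_eq_one_comm.mp h.1

lemma transpose_s11 (h : SO3 R) : SO3 Rᵀ :=
  ⟨by rw [transpose_transpose, h.mul_transpose_self], by rw [det_transpose, h.2]⟩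

lemma mul {S : M3} (hR : SO3 R) (hS : SO3 S) : SO3 (R * S) := by
  refine ⟨?_, by rw [det_mul, hR.2, hS.2, one_mul]⟩
  rw [transpose_mul, Matrix.mul_assoc, ← Matrix.mul_assoc Rᵀ, hR.1, Matrix.one_mul, hS.1]

lemma adjugate_eq (h : SO3 R) : adjugate R = Rᵀ := by
  calc adjugate R = Rᵀ * R * adjugate R := by rw [h.1, Matrix.one_mul]
    _ = Rᵀ := by rw [Matrix.mul_assoc, mul_adjugate, h.2, one_smul, Matrix.mul_one]

end SO3

lemma matVec_mul (A B : M3) (v : V3) : matVec (A * B) v = matVec A (matVec B v) := by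
  simp [matVec, mulVec_mulVec]

lemma matVec_one (v : V3) : matVec 1 v = v := by
  simp [matVec]

lemma matVec_neg (A : M3) (v : V3) : matVec A (-v) = -matVec A v := by
  simp [matVec, mulVec_neg]

lemma SO3.matVec_transpose_matVec {R : M3} (h : SO3 R) (v : V3) : matVec Rᵀ (matVec R v) = v := by
  rw [← matVec_mul, h.1, matVec_one]

lemma SO3.matVec_matVec_transpose {R : M3} (h : SO3 R) (v : V3) : matVec R (matVec Rᵀ v) = v :=
  h.transpose_s11.matVec_transpose_matVec v

lemma dot3_comm (u v : V3) : dot3 u v = dot3 v u := by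
  simp only [dot3]; ring

lemma dot3_smul_left (c : ℝ) (u v : V3) : dot3 (c • u) v = c * dot3 u v := by
  simp only [dot3, PiLp.smul_apply, smul_eq_mul]; ring

lemma dot3_smul_right (c : ℝ) (u v : V3) : dot3 u (c • v) = c * dot3 u v := by
  rw [dot3_comm, dot3_smul_left, dot3_comm]

lemma dot3_neg_right (u v : V3) : dot3 u (-v) = -dot3 u v := by
  simpa using dot3_smul_right (-1) u v

lemma dot3_matVec (A : M3) (u v : V3) : dot3 u (matVec A v) = dot3 (matVec Aᵀ u) v := by
  simp only [dot3, matVec, mulVec, dotProduct, Fin.sum_univ_three, transpose_apply]; ring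

lemma dot3_single_matVec_single (A : M3) (i : Fin 3) :
    dot3 (EuclideanSpace.single i 1) (matVec A (EuclideanSpace.single i 1)) = A i i := by
  fin_cases i <;> simp [dot3, matVec]

lemma norm_eq_sqrt_dot3_self (v : V3) : ‖v‖ = √(dot3 v v) := by
  simp [EuclideanSpace.norm_eq, dot3, Fin.sum_univ_three, Real.norm_eq_abs, sq, add_assoc]

lemma SO3.norm_matVec {R : M3} (h : SO3 R) (v : V3) : ‖matVec R v‖ = ‖v‖ := by
  rw [norm_eq_sqrt_dot3_self, norm_eq_sqrt_dot3_self, dot3_matVec, ← matVec_mul, h.1, matVec_one]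

lemma cross3_smul_smul (c d : ℝ) (u v : V3) : cross3 (c • u) (d • v) = (c * d) • cross3 u v := by
  ext i; fin_cases i <;> simp [cross3] <;> ring

lemma cross3_neg_right (u v : V3) : cross3 u (-v) = -cross3 u v := by
  ext i; fin_cases i <;> simp [cross3] <;> ring

lemma cross3_matVec_matVec_eq_adjugate (A : M3) (u v : V3) :
    cross3 (matVec A u) (matVec A v) = matVec (adjugate A)ᵀ (cross3 u v) := by
  ext i
  rw [adjugate_fin_three]
  fin_cases i <;> simp [cross3, matVec, mulVec, dotProduct, Fin.sum_univ_three] <;> ring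

lemma SO3.cross3_matVec_matVec {R : M3} (h : SO3 R) (u v : V3) :
    cross3 (matVec R u) (matVec R v) = matVec R (cross3 u v) := by
  rw [cross3_matVec_matVec_eq_adjugate, h.adjugate_eq, transpose_transpose]

lemma SO3.matVec_normalize {R : M3} (h : SO3 R) (v : V3) :
    matVec R (‖v‖⁻¹ • v) = ‖matVec R v‖⁻¹ • matVec R v := by
  rw [matVec_smul, h.norm_matVec]

lemma vee_smul (c : ℝ) (A : M3) : vee (c • A) = c • vee A := by
  ext i; fin_cases i <;> simp [vee]

lemma vee_diagonal_mul_sub (f : Fin 3 → ℝ) (P : M3) :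
    vee (diagonal f * P - Pᵀ * diagonal f) =
      ∑ i, f i • cross3 (matVec Pᵀ (EuclideanSpace.single i 1)) (EuclideanSpace.single i 1) := by
  ext k
  fin_cases k <;> simp [vee, cross3, matVec, Fin.sum_univ_three] <;> ring

lemma trace_diagonal_mul {n R : Type*} [Fintype n] [DecidableEq n] [NonUnitalNonAssocSemiring R]
    (f : n → R) (A : Matrix n n R) : trace (diagonal f * A) = ∑ i, f i * A i i := by
  simp only [trace, diag_apply, diagonal_mul]

section RelativeAttitude

variable {R₁ R₂ Q : M3} {u c₁ c₂ : V3}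

lemma dot3_relative (hc₁ : matVec R₁ᵀ u = c₁) (hc₂ : matVec R₂ᵀ u = -c₂) :
    dot3 u (matVec (R₁ * Qᵀ * R₂ᵀ) u) = -dot3 c₂ (matVec Q c₁) := by
  rw [matVec_mul, matVec_mul, hc₂, dot3_matVec, hc₁, matVec_neg, dot3_neg_right, dot3_matVec,
    transpose_transpose, dot3_comm]

lemma cross3_relative (hR₂ : SO3 R₂) (hQ : SO3 Q) (hc₁ : matVec R₁ᵀ u = c₁)
    (hc₂ : matVec R₂ᵀ u = -c₂) :
    cross3 (matVec (R₁ * Qᵀ * R₂ᵀ)ᵀ u) u = matVec (R₂ * Q) (cross3 (matVec Qᵀ c₂) c₁) := by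
  have hu : u = matVec R₂ (-c₂) := by rw [← hc₂, hR₂.matVec_matVec_transpose]
  calc cross3 (matVec (R₁ * Qᵀ * R₂ᵀ)ᵀ u) u
        = cross3 (matVec R₂ (matVec Q c₁)) (matVec R₂ (-c₂)) := by
        rw [← hu, ← hc₁, ← matVec_mul, ← matVec_mul]
        simp only [transpose_mul, transpose_transpose, Matrix.mul_assoc]
    _ = matVec R₂ (cross3 (matVec Q (matVec Qᵀ c₂)) (matVec Q c₁)) := by
        rw [hR₂.cross3_matVec_matVec, hQ.matVec_matVec_transpose, cross3_neg_right,
          cross3_anticomm, neg_neg]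
    _ = matVec (R₂ * Q) (cross3 (matVec Qᵀ c₂) c₁) := by
        rw [hQ.cross3_matVec_matVec, matVec_mul]

end RelativeAttitude

lemma conj_apply_self (U M : M3) (i : Fin 3) :
    (Uᵀ * M * U) i i = dot3 (matVec U (EuclideanSpace.single i 1))
      (matVec M (matVec U (EuclideanSpace.single i 1))) := by
  rw [← dot3_single_matVec_single (Uᵀ * M * U) i, matVec_mul, matVec_mul, dot3_matVec,
    transpose_transpose]

lemma SO3.cross3_conj {U : M3} (hU : SO3 U) (M : M3) (e : V3) :
    cross3 (matVec (Uᵀ * M * U)ᵀ e) e =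
      matVec Uᵀ (cross3 (matVec Mᵀ (matVec U e)) (matVec U e)) := by
  rw [← hU.transpose_s11.cross3_matVec_matVec, hU.matVec_transpose_matVec, transpose_mul,
    transpose_mul, transpose_transpose, matVec_mul, matVec_mul]

lemma half_trace_two_smul_diagonal_mul_one_sub (kα kβ : ℝ) (P : M3) :
    (1 / 2) * trace ((2 : ℝ) • diagonal ![kα, kβ, 0] * (1 - P)) =
      kα * (1 - P 0 0) + kβ * (1 - P 1 1) := by
  rw [smul_mul, trace_smul, trace_diagonal_mul]
  simp [Fin.sum_univ_three]

lemma half_vee_two_smul_diagonal_mul_sub (kα kβ : ℝ) (P : M3) :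
    (1 / 2 : ℝ) •
        vee ((2 : ℝ) • diagonal ![kα, kβ, 0] * P - Pᵀ * ((2 : ℝ) • diagonal ![kα, kβ, 0])) =
      kα • cross3 (matVec Pᵀ (EuclideanSpace.single 0 1)) (EuclideanSpace.single 0 1) +
        kβ • cross3 (matVec Pᵀ (EuclideanSpace.single 1 1)) (EuclideanSpace.single 1 1) := by
  rw [Matrix.smul_mul, Matrix.mul_smul, ← smul_sub, vee_smul, smul_smul, vee_diagonal_mul_sub]
  simp [Fin.sum_univ_three]

theorem error_function_FP_form_general
    (s₁₂ s₁₃ s₂₁ s₂₃ : V3)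
    (hopp : s₁₂ = -s₂₁)
    (s₁₂₃ s₂₁₃ : V3) (hs₁₂₃ : s₁₂₃ = cross3 s₁₂ s₁₃) (hs₂₁₃ : s₂₁₃ = cross3 s₂₁ s₂₃)
    (hnormal : ‖s₂₁₃‖⁻¹ • s₂₁₃ = -(‖s₁₂₃‖⁻¹ • s₁₂₃))
    (R₁ R₂ : M3) (hR₁ : SO3 R₁) (hR₂ : SO3 R₂)
    (b₁₂ b₁₃ b₂₁ b₂₃ b₁₂₃ b₂₁₃ : V3)
    (hb₁₂ : b₁₂ = matVec R₁ᵀ s₁₂) (hb₁₃ : b₁₃ = matVec R₁ᵀ s₁₃)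
    (hb₂₁ : b₂₁ = matVec R₂ᵀ s₂₁) (hb₂₃ : b₂₃ = matVec R₂ᵀ s₂₃)
    (hb₁₂₃ : b₁₂₃ = cross3 b₁₂ b₁₃) (hb₂₁₃ : b₂₁₃ = cross3 b₂₁ b₂₃)
    (a₁₂ : ℝ) (ha₁₂ : a₁₂ = ‖b₂₁₃‖ * ‖b₁₂₃‖)
    (Qd₁₂ Qd₂₁ : M3) (hQd : SO3 Qd₁₂) (hQd₂₁ : Qd₂₁ = Qd₁₂ᵀ)
    (kα kβ : ℝ)
    (Ψ : ℝ)
    (hΨ : Ψ = kα * (1 + dot3 b₂₁ (matVec Qd₁₂ b₁₂))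
        + kβ * (1 + a₁₂⁻¹ * dot3 b₂₁₃ (matVec Qd₁₂ b₁₂₃)))
    (e₁₂ : V3)
    (he₁₂ : e₁₂ = kα • cross3 (matVec Qd₂₁ b₂₁) b₁₂
        + (kβ / a₁₂) • cross3 (matVec Qd₂₁ b₂₁₃) b₁₂₃)
    (U : M3) (hUSO : SO3 U)
    (hU : U = Matrix.of fun i j =>
      ![s₁₂, ‖s₁₂₃‖⁻¹ • s₁₂₃, ‖cross3 s₁₂ s₁₂₃‖⁻¹ • cross3 s₁₂ s₁₂₃] j i)
    (G F P : M3) (hG : G = Matrix.diagonal ![kα, kβ, 0])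
    (hF : F = (2 : ℝ) • G) (hP : P = Uᵀ * R₁ * Qd₂₁ * R₂ᵀ * U)
    (eP : V3) (heP : eP = (1 / 2 : ℝ) • vee (F * P - Pᵀ * F)) :
    SO3 P ∧ Ψ = (1 / 2) * Matrix.trace (F * (1 - P)) ∧
      eP = matVec (Uᵀ * R₂ * Qd₁₂) e₁₂ ∧ ‖eP‖ = ‖e₁₂‖ := by
  subst hQd₂₁ hF hG
  have hPM : P = Uᵀ * (R₁ * Qd₁₂ᵀ * R₂ᵀ) * U := by rw [hP]; simp only [Matrix.mul_assoc]
  have hu₀ : matVec U (EuclideanSpace.single 0 1) = s₁₂ := by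
    ext k; simp [hU, matVec]
  have hu₁ : matVec U (EuclideanSpace.single 1 1) = ‖s₁₂₃‖⁻¹ • s₁₂₃ := by
    ext k; simp [hU, matVec]
  have hc₀₂ : matVec R₂ᵀ s₁₂ = -b₂₁ := by rw [hopp, matVec_neg, hb₂₁]
  have hc₁₁ : matVec R₁ᵀ (‖s₁₂₃‖⁻¹ • s₁₂₃) = ‖b₁₂₃‖⁻¹ • b₁₂₃ := by
    rw [hR₁.transpose_s11.matVec_normalize, hs₁₂₃, ← hR₁.transpose_s11.cross3_matVec_matVec, ← hb₁₂,
      ← hb₁₃, ← hb₁₂₃]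
  have hc₁₂ : matVec R₂ᵀ (‖s₁₂₃‖⁻¹ • s₁₂₃) = -(‖b₂₁₃‖⁻¹ • b₂₁₃) := by
    rw [← neg_neg (‖s₁₂₃‖⁻¹ • s₁₂₃), ← hnormal, matVec_neg, hR₂.transpose_s11.matVec_normalize, hs₂₁₃,
      ← hR₂.transpose_s11.cross3_matVec_matVec, ← hb₂₁, ← hb₂₃, ← hb₂₁₃]
  have heP' : eP = matVec (Uᵀ * R₂ * Qd₁₂) e₁₂ := by
    rw [heP, half_vee_two_smul_diagonal_mul_sub, hPM, hUSO.cross3_conj, hUSO.cross3_conj, hu₀, hu₁,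
      cross3_relative hR₂ hQd hb₁₂.symm hc₀₂, cross3_relative hR₂ hQd hc₁₁ hc₁₂, matVec_smul,
      cross3_smul_smul, he₁₂, ha₁₂]
    simp only [matVec_mul, matVec_add, matVec_smul, smul_smul, div_eq_mul_inv, mul_inv]
  refine ⟨?_, ?_, heP', ?_⟩
  · rw [hPM]
    exact (hUSO.transpose_s11.mul ((hR₁.mul hQd.transpose_s11).mul hR₂.transpose_s11)).mul hUSO
  · rw [hΨ, half_trace_two_smul_diagonal_mul_one_sub, hPM, conj_apply_self, conj_apply_self,
      hu₀, hu₁, dot3_relative hb₁₂.symm hc₀₂, dot3_relative hc₁₁ hc₁₂, matVec_smul,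
      dot3_smul_left, dot3_smul_right, ha₁₂, mul_inv]
    ring
  · rw [heP', ((hUSO.transpose_s11.mul hR₂).mul hQd).norm_matVec]

/-- the configuration error function and error vector in terms of
F and P = Uᵀ R₁ Q^d₂₁ R₂ᵀ U. -/
theorem error_function_FP_form
    (s₁₂ s₁₃ s₂₁ s₂₃ : V3)
    (hs₁₂ : ‖s₁₂‖ = 1) (hs₁₃ : ‖s₁₃‖ = 1) (hs₂₁ : ‖s₂₁‖ = 1) (hs₂₃ : ‖s₂₃‖ = 1)
    (hopp : s₁₂ = -s₂₁)
    (s₁₂₃ s₂₁₃ : V3) (hs₁₂₃ : s₁₂₃ = cross3 s₁₂ s₁₃) (hs₂₁₃ : s₂₁₃ = cross3 s₂₁ s₂₃)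
    (h₁ : s₁₂₃ ≠ 0) (h₂ : s₂₁₃ ≠ 0)
    (hnormal : ‖s₂₁₃‖⁻¹ • s₂₁₃ = -(‖s₁₂₃‖⁻¹ • s₁₂₃))
    (R₁ R₂ : M3) (hR₁ : SO3 R₁) (hR₂ : SO3 R₂)
    (b₁₂ b₁₃ b₂₁ b₂₃ b₁₂₃ b₂₁₃ : V3)
    (hb₁₂ : b₁₂ = matVec R₁ᵀ s₁₂) (hb₁₃ : b₁₃ = matVec R₁ᵀ s₁₃)
    (hb₂₁ : b₂₁ = matVec R₂ᵀ s₂₁) (hb₂₃ : b₂₃ = matVec R₂ᵀ s₂₃)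
    (hb₁₂₃ : b₁₂₃ = cross3 b₁₂ b₁₃) (hb₂₁₃ : b₂₁₃ = cross3 b₂₁ b₂₃)
    (a₁₂ : ℝ) (ha₁₂ : a₁₂ = ‖b₂₁₃‖ * ‖b₁₂₃‖)
    (Qd₁₂ Qd₂₁ : M3) (hQd : SO3 Qd₁₂) (hQd₂₁ : Qd₂₁ = Qd₁₂ᵀ)
    (kα kβ : ℝ) (hkα : 0 < kα) (hkβ : 0 < kβ)
    (Ψ : ℝ)
    (hΨ : Ψ = kα * (1 + dot3 b₂₁ (matVec Qd₁₂ b₁₂))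
        + kβ * (1 + a₁₂⁻¹ * dot3 b₂₁₃ (matVec Qd₁₂ b₁₂₃)))
    (e₁₂ : V3)
    (he₁₂ : e₁₂ = kα • cross3 (matVec Qd₂₁ b₂₁) b₁₂
        + (kβ / a₁₂) • cross3 (matVec Qd₂₁ b₂₁₃) b₁₂₃)
    (U : M3) (hUSO : SO3 U)
    (hU : U = Matrix.of fun i j =>
      ![s₁₂, ‖s₁₂₃‖⁻¹ • s₁₂₃, ‖cross3 s₁₂ s₁₂₃‖⁻¹ • cross3 s₁₂ s₁₂₃] j i)
    (G F P : M3) (hG : G = Matrix.diagonal ![kα, kβ, 0])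
    (hF : F = (2 : ℝ) • G) (hP : P = Uᵀ * R₁ * Qd₂₁ * R₂ᵀ * U)
    (eP : V3) (heP : eP = (1 / 2 : ℝ) • vee (F * P - Pᵀ * F)) :
    SO3 P ∧ Ψ = (1 / 2) * Matrix.trace (F * (1 - P)) ∧
      eP = matVec (Uᵀ * R₂ * Qd₁₂) e₁₂ ∧ ‖eP‖ = ‖e₁₂‖ :=
  error_function_FP_form_general s₁₂ s₁₃ s₂₁ s₂₃ hopp s₁₂₃ s₂₁₃ hs₁₂₃ hs₂₁₃ hnormal R₁ R₂ hR₁ hR₂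
    b₁₂ b₁₃ b₂₁ b₂₃ b₁₂₃ b₂₁₃ hb₁₂ hb₁₃ hb₂₁ hb₂₃ hb₁₂₃ hb₂₁₃ a₁₂ ha₁₂ Qd₁₂ Qd₂₁ hQd hQd₂₁ kα kβ Ψ
    hΨ e₁₂ he₁₂ U hUSO hU G F P hG hF hP eP heP
end
end

section
/- Let f₁, f₂, f₃ ≥ 0, not all zero, F = diag(f₁, f₂, f₃), and P ∈ SO(3). Define Φ = (1/2) tr[F(I − P)] and e_P = (1/2)(FP − PᵀF)^∨, and let h₁ = min{f₁+f₂, f₂+f₃, f₃+f₁}, h₂ = max{(f₁−f₂)², (f₂−f₃)², (f₃−f₁)²}, h₃ = max{(f₁+f₂)², (f₂+f₃)², (f₃+f₁)²}. Then Φ ≥ (h₁/(h₂+h₃)) ‖e_P‖². -/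
noncomputable section
open Matrix

attribute [local instance] Matrix.normedAddCommGroup Matrix.normedSpace

/-!
Parametrize `P` by a unit quaternion `q = (q₀, q₁, q₂, q₃)` and let `(i, j, k)` run over the
cyclic permutations of `(1, 2, 3)`. Then `Φ = ∑ (f_j + f_k) q_i²` and
`(e_P)_i = (f_j + f_k) q₀ q_i + (f_k - f_j) q_j q_k`. With `s = 1 - q₀² = q₁² + q₂² + q₃²` we get
`Φ ≥ h₁ s`, while AM–GM on the cross term gives
`s (e_P)_i² ≤ s (f_j + f_k)² q_i² + (f_k - f_j)² q_j² q_k²`; summing, and using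
`∑ q_j² q_k² ≤ s²`, `s ‖e_P‖² ≤ (h₂ + h₃) s²`. The quaternion is never constructed: the
quantities `q_i²`, `q₀ q_i` and `q_j q_k` are affine in the entries of `P`, and their relations
follow from `PᵀP = 1` and `adj P = Pᵀ`.
-/

theorem mul_sq_add_le {s u x y a b : ℝ} (hu : 0 ≤ u) (hs : s ≤ 1) (hx : x ^ 2 = (1 - s) * u) :
    s * (a * x + b * y) ^ 2 ≤ s * a ^ 2 * u + b ^ 2 * y ^ 2 := by
  set X := s ^ 2 * a ^ 2 * u
  set Y := (1 - s) * b ^ 2 * y ^ 2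
  have hY : 0 ≤ Y := mul_nonneg (mul_nonneg (by linarith) (sq_nonneg b)) (sq_nonneg y)
  -- AM–GM: the square of the cross term is `4 X Y`
  have hcross : 2 * s * a * b * x * y ≤ X + Y := by
    refine le_of_sq_le_sq ?_ (by positivity)
    linear_combination (4 * s ^ 2 * a ^ 2 * b ^ 2 * y ^ 2) * hx + sq_nonneg (X - Y)
  linear_combination hcross + (s * a ^ 2) * hx

theorem sum_mul_cyclic_le_sq {u : Fin 3 → ℝ} (hu : ∀ i, 0 ≤ u i) :
    ∑ i, u (i + 1) * u (i + 2) ≤ (∑ i, u i) ^ 2 := by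
  have h₀ := hu 0
  have h₁ := hu 1
  have h₂ := hu 2
  simp only [Fin.sum_univ_three, Fin.isValue, Fin.reduceAdd]
  nlinarith [mul_nonneg h₀ h₁, mul_nonneg h₁ h₂, mul_nonneg h₂ h₀]

def attitudeErrorFun (f : Fin 3 → ℝ) (P : M3) : ℝ := (1 / 2) * trace (diagonal f * (1 - P))

def attitudeErrorVec (f : Fin 3 → ℝ) (P : M3) : V3 :=
  (1 / 2 : ℝ) • vee (diagonal f * P - Pᵀ * diagonal f)

-- If `P` is the rotation of a unit quaternion `q`, then `halfAngleSinSq P = 1 - q₀²`,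
-- `eulerParamSq P i = q_{i+1}²`, `skewCoord P i = q₀ q_{i+1}`, and `symmCoord P i` is the product
-- of the other two of `q₁, q₂, q₃`.
def halfAngleSinSq (P : M3) : ℝ := (3 - trace P) / 4

def eulerParamSq (P : M3) (i : Fin 3) : ℝ := (1 + 2 * P i i - trace P) / 4

def skewCoord (P : M3) (i : Fin 3) : ℝ := (P (i + 2) (i + 1) - P (i + 1) (i + 2)) / 4

def symmCoord (P : M3) (i : Fin 3) : ℝ := (P (i + 2) (i + 1) + P (i + 1) (i + 2)) / 4

theorem sum_eulerParamSq (P : M3) : ∑ i, eulerParamSq P i = halfAngleSinSq P := by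
  simp only [eulerParamSq, halfAngleSinSq, Fin.sum_univ_three, trace_fin_three]
  ring

theorem halfAngleSinSq_eq_add (P : M3) (i : Fin 3) :
    halfAngleSinSq P = eulerParamSq P i + eulerParamSq P (i + 1) + eulerParamSq P (i + 2) := by
  rw [← sum_eulerParamSq]
  fin_cases i <;> simp [Fin.sum_univ_three] <;> ring

theorem attitudeErrorFun_eq_sum (f : Fin 3 → ℝ) (P : M3) :
    attitudeErrorFun f P = ∑ i, (f (i + 1) + f (i + 2)) * eulerParamSq P i := by
  simp only [attitudeErrorFun, eulerParamSq, trace_fin_three, diagonal_mul, Matrix.sub_apply,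
    one_apply_eq, Fin.sum_univ_three, Fin.isValue, Fin.reduceAdd]
  ring

theorem attitudeErrorVec_apply (f : Fin 3 → ℝ) (P : M3) (i : Fin 3) :
    attitudeErrorVec f P i =
      (f (i + 1) + f (i + 2)) * skewCoord P i + (f (i + 2) - f (i + 1)) * symmCoord P i := by
  fin_cases i <;> simp [attitudeErrorVec, vee, skewCoord, symmCoord] <;> ring

namespace SO3

variable {P : M3}

theorem mul_transpose (hP : SO3 P) : P * Pᵀ = 1 := mul_eq_one_comm.mp hP.1

theorem adjugate_eq_transpose (hP : SO3 P) : P.adjugate = Pᵀ :=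
  calc P.adjugate = (Pᵀ * P) * P.adjugate := by rw [hP.1, Matrix.one_mul]
    _ = Pᵀ := by rw [Matrix.mul_assoc, mul_adjugate, hP.2, one_smul, Matrix.mul_one]

theorem sum_sq_col (hP : SO3 P) (j : Fin 3) : ∑ k, P k j ^ 2 = 1 := by
  simpa [mul_apply, sq] using congrFun (congrFun hP.1 j) j

theorem sum_sq_row (hP : SO3 P) (i : Fin 3) : ∑ k, P i k ^ 2 = 1 := by
  simpa [mul_apply, sq] using congrFun (congrFun hP.mul_transpose i) i

theorem cofactor_eq_diag (hP : SO3 P) (i : Fin 3) :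
    P (i + 1) (i + 1) * P (i + 2) (i + 2) - P (i + 1) (i + 2) * P (i + 2) (i + 1) = P i i := by
  have := congrFun (congrFun hP.adjugate_eq_transpose i) i
  fin_cases i <;> simp [adjugate_fin_three] at this ⊢ <;> linear_combination this

theorem skewCoord_sq (hP : SO3 P) (i : Fin 3) :
    skewCoord P i ^ 2 = (1 - halfAngleSinSq P) * eulerParamSq P i := by
  have k := hP.cofactor_eq_diag i
  have r₁ := hP.sum_sq_row (i + 1)
  have r₂ := hP.sum_sq_row (i + 2)
  have c := hP.sum_sq_col i
  fin_cases i <;>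
    simp [skewCoord, halfAngleSinSq, eulerParamSq, trace_fin_three, Fin.sum_univ_three]
      at k r₁ r₂ c ⊢ <;>
    linear_combination (2 * k + r₁ + r₂ - c) / 16

theorem symmCoord_sq (hP : SO3 P) (i : Fin 3) :
    symmCoord P i ^ 2 = eulerParamSq P (i + 1) * eulerParamSq P (i + 2) := by
  have k := hP.cofactor_eq_diag i
  have r₁ := hP.sum_sq_row (i + 1)
  have r₂ := hP.sum_sq_row (i + 2)
  have c := hP.sum_sq_col i
  fin_cases i <;>
    simp [symmCoord, eulerParamSq, trace_fin_three, Fin.sum_univ_three] at k r₁ r₂ c ⊢ <;>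
    linear_combination (-2 * k + r₁ + r₂ - c) / 16

theorem eulerParamSq_nonneg (hP : SO3 P) (i : Fin 3) : 0 ≤ eulerParamSq P i := by
  -- `q_i² = q_i² (q₀² + q₁² + q₂² + q₃²)`, and each product on the right is a square
  have key : eulerParamSq P i = skewCoord P i ^ 2 + eulerParamSq P i ^ 2
      + symmCoord P (i + 1) ^ 2 + symmCoord P (i + 2) ^ 2 := by
    rw [hP.skewCoord_sq, hP.symmCoord_sq, hP.symmCoord_sq, halfAngleSinSq_eq_add P i]
    fin_cases i <;> simp <;> ring
  rw [key]
  positivity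

theorem halfAngleSinSq_nonneg (hP : SO3 P) : 0 ≤ halfAngleSinSq P := by
  rw [← sum_eulerParamSq]
  exact Finset.sum_nonneg fun i _ => hP.eulerParamSq_nonneg i

theorem halfAngleSinSq_le_one (hP : SO3 P) : halfAngleSinSq P ≤ 1 := by
  -- `q₀² = q₀² (q₀² + q₁² + q₂² + q₃²)`
  have key : 1 - halfAngleSinSq P = (1 - halfAngleSinSq P) ^ 2 + ∑ i, skewCoord P i ^ 2 := by
    simp_rw [hP.skewCoord_sq, ← Finset.mul_sum, sum_eulerParamSq]
    ring
  have : 0 ≤ 1 - halfAngleSinSq P := by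
    rw [key]
    positivity
  linarith

theorem halfAngleSinSq_mul_attitudeErrorVec_apply_sq_le (hP : SO3 P) (f : Fin 3 → ℝ) (i : Fin 3) :
    halfAngleSinSq P * attitudeErrorVec f P i ^ 2 ≤
      halfAngleSinSq P * (f (i + 1) + f (i + 2)) ^ 2 * eulerParamSq P i +
        (f (i + 1) - f (i + 2)) ^ 2 * (eulerParamSq P (i + 1) * eulerParamSq P (i + 2)) := by
  rw [attitudeErrorVec_apply, sub_sq_comm, ← hP.symmCoord_sq]
  exact mul_sq_add_le (hP.eulerParamSq_nonneg i) hP.halfAngleSinSq_le_one (hP.skewCoord_sq i)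

theorem halfAngleSinSq_mul_norm_attitudeErrorVec_sq_le (hP : SO3 P) (f : Fin 3 → ℝ) {A B : ℝ}
    (hA : ∀ i, (f (i + 1) + f (i + 2)) ^ 2 ≤ A) (hB : ∀ i, (f (i + 1) - f (i + 2)) ^ 2 ≤ B) :
    halfAngleSinSq P * ‖attitudeErrorVec f P‖ ^ 2 ≤ (B + A) * halfAngleSinSq P ^ 2 := by
  have hu := hP.eulerParamSq_nonneg
  have hsum := sum_eulerParamSq P
  have hs := hP.halfAngleSinSq_nonneg
  set s := halfAngleSinSq P
  calc s * ‖attitudeErrorVec f P‖ ^ 2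
      ≤ ∑ i, (s * (f (i + 1) + f (i + 2)) ^ 2 * eulerParamSq P i +
          (f (i + 1) - f (i + 2)) ^ 2 * (eulerParamSq P (i + 1) * eulerParamSq P (i + 2))) := by
        rw [EuclideanSpace.real_norm_sq_eq, Finset.mul_sum]
        exact Finset.sum_le_sum fun i _ => hP.halfAngleSinSq_mul_attitudeErrorVec_apply_sq_le f i
    _ ≤ ∑ i, (s * A * eulerParamSq P i +
          B * (eulerParamSq P (i + 1) * eulerParamSq P (i + 2))) := by
        refine Finset.sum_le_sum fun i _ => add_le_add ?_ ?_
        · gcongr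
          · exact hu i
          · exact hA i
        · exact mul_le_mul_of_nonneg_right (hB i) (mul_nonneg (hu _) (hu _))
    _ = s * A * s + B * ∑ i, eulerParamSq P (i + 1) * eulerParamSq P (i + 2) := by
        rw [Finset.sum_add_distrib, ← Finset.mul_sum, ← Finset.mul_sum, hsum]
    _ ≤ s * A * s + B * s ^ 2 := by
        gcongr
        · exact (sq_nonneg _).trans (hB 0)
        · rw [← hsum]
          exact sum_mul_cyclic_le_sq hu
    _ = (B + A) * s ^ 2 := by ring

theorem norm_attitudeErrorVec_sq_le (hP : SO3 P) (f : Fin 3 → ℝ) {A B : ℝ}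
    (hA : ∀ i, (f (i + 1) + f (i + 2)) ^ 2 ≤ A) (hB : ∀ i, (f (i + 1) - f (i + 2)) ^ 2 ≤ B) :
    ‖attitudeErrorVec f P‖ ^ 2 ≤ (B + A) * halfAngleSinSq P := by
  have hu := hP.eulerParamSq_nonneg
  rcases hP.halfAngleSinSq_nonneg.eq_or_lt with hs | hs
  · have hu₀ (i : Fin 3) : eulerParamSq P i = 0 := by
      linarith [halfAngleSinSq_eq_add P i, hu i, hu (i + 1), hu (i + 2)]
    have hcomp (i : Fin 3) : attitudeErrorVec f P i = 0 := by
      have hskew : skewCoord P i = 0 := by simpa [hu₀] using hP.skewCoord_sq i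
      have hsymm : symmCoord P i = 0 := by simpa [hu₀] using hP.symmCoord_sq i
      rw [attitudeErrorVec_apply, hskew, hsymm]
      ring
    rw [EuclideanSpace.real_norm_sq_eq, ← hs]
    simp only [hcomp]
    simp
  · refine le_of_mul_le_mul_left ?_ hs
    linarith [hP.halfAngleSinSq_mul_norm_attitudeErrorVec_sq_le f hA hB]

theorem mul_halfAngleSinSq_le_attitudeErrorFun (hP : SO3 P) (f : Fin 3 → ℝ) {h : ℝ}
    (hh : ∀ i, h ≤ f (i + 1) + f (i + 2)) : h * halfAngleSinSq P ≤ attitudeErrorFun f P := by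
  rw [attitudeErrorFun_eq_sum, ← sum_eulerParamSq, Finset.mul_sum]
  exact Finset.sum_le_sum fun i _ => mul_le_mul_of_nonneg_right (hh i) (hP.eulerParamSq_nonneg i)

theorem div_mul_norm_attitudeErrorVec_sq_le (hP : SO3 P) (f : Fin 3 → ℝ) {h A B : ℝ}
    (h_nonneg : 0 ≤ h) (hh : ∀ i, h ≤ f (i + 1) + f (i + 2))
    (hA : ∀ i, (f (i + 1) + f (i + 2)) ^ 2 ≤ A) (hB : ∀ i, (f (i + 1) - f (i + 2)) ^ 2 ≤ B) :
    h / (B + A) * ‖attitudeErrorVec f P‖ ^ 2 ≤ attitudeErrorFun f P := by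
  have hBA : 0 ≤ B + A := add_nonneg ((sq_nonneg _).trans (hB 0)) ((sq_nonneg _).trans (hA 0))
  calc h / (B + A) * ‖attitudeErrorVec f P‖ ^ 2
      ≤ h / (B + A) * ((B + A) * halfAngleSinSq P) := by
        gcongr
        exact hP.norm_attitudeErrorVec_sq_le f hA hB
    _ ≤ h * halfAngleSinSq P := by
        rcases hBA.eq_or_lt with hBA | hBA
        · rw [← hBA, div_zero, zero_mul]
          exact mul_nonneg h_nonneg hP.halfAngleSinSq_nonneg
        · rw [← mul_assoc, div_mul_cancel₀ _ hBA.ne']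
    _ ≤ attitudeErrorFun f P := hP.mul_halfAngleSinSq_le_attitudeErrorFun f hh

end SO3

theorem Phi_lower_bound_general
    (f₁ f₂ f₃ : ℝ) (hf₁ : 0 ≤ f₁) (hf₂ : 0 ≤ f₂) (hf₃ : 0 ≤ f₃)
    (F : M3) (hF : F = Matrix.diagonal ![f₁, f₂, f₃])
    (P : M3) (hP : SO3 P)
    (Φ : ℝ) (hΦ : Φ = (1 / 2) * Matrix.trace (F * (1 - P)))
    (eP : V3) (heP : eP = (1 / 2 : ℝ) • vee (F * P - Pᵀ * F))
    (h₁ h₂ h₃ : ℝ)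
    (hh₁ : h₁ = min (f₁ + f₂) (min (f₂ + f₃) (f₃ + f₁)))
    (hh₂ : h₂ = max ((f₁ - f₂) ^ 2) (max ((f₂ - f₃) ^ 2) ((f₃ - f₁) ^ 2)))
    (hh₃ : h₃ = max ((f₁ + f₂) ^ 2) (max ((f₂ + f₃) ^ 2) ((f₃ + f₁) ^ 2))) :
    (h₁ / (h₂ + h₃)) * ‖eP‖ ^ 2 ≤ Φ := by
  set f : Fin 3 → ℝ := ![f₁, f₂, f₃]
  have hA (i : Fin 3) : (f (i + 1) + f (i + 2)) ^ 2 ≤ h₃ := by fin_cases i <;> simp [f, hh₃]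
  have hB (i : Fin 3) : (f (i + 1) - f (i + 2)) ^ 2 ≤ h₂ := by fin_cases i <;> simp [f, hh₂]
  have hh (i : Fin 3) : h₁ ≤ f (i + 1) + f (i + 2) := by fin_cases i <;> simp [f, hh₁]
  have hh₁_nonneg : 0 ≤ h₁ := by rw [hh₁]; positivity
  obtain rfl : eP = attitudeErrorVec f P := by rw [heP, hF]; rfl
  obtain rfl : Φ = attitudeErrorFun f P := by rw [hΦ, hF]; rfl
  exact hP.div_mul_norm_attitudeErrorVec_sq_le f hh₁_nonneg hh hA hB

/-- lower quadratic bound of the error function Φ on SO(3). -/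
theorem Phi_lower_bound
    (f₁ f₂ f₃ : ℝ) (hf₁ : 0 ≤ f₁) (hf₂ : 0 ≤ f₂) (hf₃ : 0 ≤ f₃)
    (hne : ¬(f₁ = 0 ∧ f₂ = 0 ∧ f₃ = 0))
    (F : M3) (hF : F = Matrix.diagonal ![f₁, f₂, f₃])
    (P : M3) (hP : SO3 P)
    (Φ : ℝ) (hΦ : Φ = (1 / 2) * Matrix.trace (F * (1 - P)))
    (eP : V3) (heP : eP = (1 / 2 : ℝ) • vee (F * P - Pᵀ * F))
    (h₁ h₂ h₃ : ℝ)
    (hh₁ : h₁ = min (f₁ + f₂) (min (f₂ + f₃) (f₃ + f₁)))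
    (hh₂ : h₂ = max ((f₁ - f₂) ^ 2) (max ((f₂ - f₃) ^ 2) ((f₃ - f₁) ^ 2)))
    (hh₃ : h₃ = max ((f₁ + f₂) ^ 2) (max ((f₂ + f₃) ^ 2) ((f₃ + f₁) ^ 2))) :
    (h₁ / (h₂ + h₃)) * ‖eP‖ ^ 2 ≤ Φ :=
  Phi_lower_bound_general f₁ f₂ f₃ hf₁ hf₂ hf₃ F hF P hP Φ hΦ eP heP h₁ h₂ h₃ hh₁ hh₂ hh₃
end
end

section
/- Along trajectories of the attitude kinematics, if ‖Ω^d₁(t)‖ ≤ B^d for all t, then the time derivative of the error vector satisfies ‖ė₁₂(t)‖ ≤ (kᵅ + kᵝ)(‖e_{Ω₁}(t)‖ + ‖e_{Ω₂}(t)‖) + B^d ‖e₁₂(t)‖, where e_{Ωᵢ}(t) = Ωᵢ(t) − Ω^dᵢ(t). -/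
noncomputable section
open Matrix

attribute [local instance] Matrix.normedAddCommGroup Matrix.normedSpace

/-!
A vector fixed in space has body-frame coordinates b = Rᵀ s with ḃ = b × Ω, and by the Leibniz
rule for the cross product, b × c rotates the same way whenever b and c do. Conjugating by the
desired relative attitude, (Qd₂₁ b)˙ = (Qd₂₁ b) × Ωd₁ + Qd₂₁ (b × (Ω₂ − Ωd₂)), so each term
X = (Qd₂₁ b) × c of e₁₂ satisfies Ẋ = X × Ωd₁ + D with ‖D‖ ≤ ‖b‖ ‖c‖ (‖eΩ₁‖ + ‖eΩ₂‖).
Rotations preserve lengths of vectors and of their cross products, so ‖b₂₁‖ ‖b₁₂‖ = 1 and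
‖b₂₁₃‖ ‖b₁₂₃‖ = a₁₂ is constant in time; summing with the weights kα and kβ / a₁₂ gives
ė₁₂ = e₁₂ × Ωd₁ + D with ‖D‖ ≤ (kα + kβ)(‖eΩ₁‖ + ‖eΩ₂‖), and ‖e₁₂ × Ωd₁‖ ≤ Bd ‖e₁₂‖.
-/
open scoped RealInnerProductSpace

lemma cross3_add_left (u v w : V3) : cross3 (u + v) w = cross3 u w + cross3 v w := by
  ext i; fin_cases i <;> simp [cross3] <;> ring

lemma cross3_smul_left (a : ℝ) (u v : V3) : cross3 (a • u) v = a • cross3 u v := by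
  ext i; fin_cases i <;> simp [cross3] <;> ring

lemma cross3_add_right (u v w : V3) : cross3 u (v + w) = cross3 u v + cross3 u w := by
  ext i; fin_cases i <;> simp [cross3] <;> ring

lemma cross3_smul_right (a : ℝ) (u v : V3) : cross3 u (a • v) = a • cross3 u v := by
  ext i; fin_cases i <;> simp [cross3] <;> ring

lemma cross3_cross3 (a b c : V3) :
    cross3 (cross3 a b) c = cross3 a (cross3 b c) + cross3 (cross3 a c) b := by
  ext i; fin_cases i <;> simp [cross3] <;> ring

lemma norm_cross3_sq (u v : V3) : ‖cross3 u v‖ ^ 2 = ‖u‖ ^ 2 * ‖v‖ ^ 2 - ⟪u, v⟫ ^ 2 := by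
  simp only [EuclideanSpace.real_norm_sq_eq, PiLp.inner_apply, Fin.sum_univ_three, cross3,
    Fin.isValue, cons_val_zero, cons_val_one, cons_val, RCLike.inner_apply, Real.ringHom_apply]
  ring

lemma norm_cross3_le (u v : V3) : ‖cross3 u v‖ ≤ ‖u‖ * ‖v‖ := by
  refine le_of_sq_le_sq ?_ (by positivity)
  rw [norm_cross3_sq, mul_pow]
  nlinarith [sq_nonneg ⟪u, v⟫]

def cross3CLM : V3 →L[ℝ] V3 →L[ℝ] V3 :=
  (LinearMap.mk₂ ℝ cross3 cross3_add_left cross3_smul_left cross3_add_right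
    cross3_smul_right).mkContinuous₂ 1 fun u v => by
      rw [one_mul]; exact norm_cross3_le u v

theorem HasDerivAt.cross3 {f g : ℝ → V3} {f' g' : V3} {t : ℝ} (hf : HasDerivAt f f' t)
    (hg : HasDerivAt g g' t) :
    HasDerivAt (fun τ => cross3 (f τ) (g τ)) (cross3 (f t) g' + cross3 f' (g t)) t :=
  cross3CLM.hasDerivAt_of_bilinear (fun _ => hf) (fun _ => hg)

def transposeMatVecCLM : M3 →L[ℝ] V3 →L[ℝ] V3 :=
  LinearMap.toContinuousLinearMap (LinearMap.toContinuousLinearMap.toLinearMap ∘ₗ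
    LinearMap.mk₂ ℝ (fun A v => matVec Aᵀ v)
      (fun A B v => by simp [matVec, Matrix.add_mulVec])
      (fun a A v => by simp [matVec, Matrix.smul_mulVec])
      (fun A u v => by simp [matVec, Matrix.mulVec_add])
      (fun a A v => by simp [matVec, Matrix.mulVec_smul]))

theorem HasDerivAt.matVec_transpose {M : ℝ → M3} {f : ℝ → V3} {M' : M3} {f' : V3} {t : ℝ}
    (hM : HasDerivAt M M' t) (hf : HasDerivAt f f' t) :
    HasDerivAt (fun τ => matVec (M τ)ᵀ (f τ)) (matVec (M t)ᵀ f' + matVec M'ᵀ (f t)) t :=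
  transposeMatVecCLM.hasDerivAt_of_bilinear (fun _ => hM) (fun _ => hf)

lemma inner_matVec_transpose {A : M3} (hA : Aᵀ * A = 1) (u v : V3) :
    ⟪matVec Aᵀ u, matVec Aᵀ v⟫ = ⟪u, v⟫ := by
  simp [matVec, EuclideanSpace.inner_eq_star_dotProduct, Matrix.dotProduct_mulVec,
    ← Matrix.mulVec_transpose, mul_eq_one_comm.mp hA]

lemma norm_matVec_transpose {A : M3} (hA : Aᵀ * A = 1) (u : V3) : ‖matVec Aᵀ u‖ = ‖u‖ := by
  rw [norm_eq_sqrt_real_inner, norm_eq_sqrt_real_inner, inner_matVec_transpose hA]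

lemma norm_cross3_matVec_transpose {A : M3} (hA : Aᵀ * A = 1) (u v : V3) :
    ‖cross3 (matVec Aᵀ u) (matVec Aᵀ v)‖ = ‖cross3 u v‖ := by
  rw [← sq_eq_sq₀ (norm_nonneg _) (norm_nonneg _), norm_cross3_sq, norm_cross3_sq,
    norm_matVec_transpose hA, norm_matVec_transpose hA, inner_matVec_transpose hA]

lemma matVec_transpose_mul_hat (A : M3) (x v : V3) :
    matVec (A * hat x)ᵀ v = cross3 (matVec Aᵀ v) x := by
  ext i; fin_cases i <;>
    simp [matVec, hat, cross3, Matrix.mulVec, dotProduct, Fin.sum_univ_three,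
      Matrix.mul_apply] <;> ring

section Kinematics

variable {t : ℝ}

theorem hasDerivAt_body_frame {R : ℝ → M3} {Ω : V3} (hR : HasDerivAt R (R t * hat Ω) t)
    (s : V3) : HasDerivAt (fun τ => matVec (R τ)ᵀ s) (cross3 (matVec (R t)ᵀ s) Ω) t := by
  have h := hR.matVec_transpose (hasDerivAt_const t s)
  rwa [show matVec (R t)ᵀ 0 = 0 by simp [matVec], zero_add, matVec_transpose_mul_hat] at h

theorem hasDerivAt_cross3_of_rotating {f g : ℝ → V3} {ω : V3}
    (hf : HasDerivAt f (cross3 (f t) ω) t) (hg : HasDerivAt g (cross3 (g t) ω) t) :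
    HasDerivAt (fun τ => cross3 (f τ) (g τ)) (cross3 (cross3 (f t) (g t)) ω) t := by
  rw [cross3_cross3]
  exact hf.cross3 hg

theorem hasDerivAt_relative_frame {Q : ℝ → M3} {b : ℝ → V3} {ω₁ ω₂ Ω : V3}
    (hQ : HasDerivAt Q (Q t * hat ω₁ - hat ω₂ * Q t) t) (hb : HasDerivAt b (cross3 (b t) Ω) t) :
    HasDerivAt (fun τ => matVec (Q τ)ᵀ (b τ))
      (cross3 (matVec (Q t)ᵀ (b t)) ω₁ + matVec (Q t)ᵀ (cross3 (b t) (Ω - ω₂))) t := by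
  convert hQ.matVec_transpose hb using 1
  ext i; fin_cases i <;>
    simp [matVec, hat, cross3, Matrix.mulVec, dotProduct, Fin.sum_univ_three, Matrix.mul_apply,
      Matrix.vecMul] <;> ring

def HasRotatingDerivAt (X : ℝ → V3) (ω : V3) (δ : ℝ) (t : ℝ) : Prop :=
  ∃ D : V3, HasDerivAt X (cross3 (X t) ω + D) t ∧ ‖D‖ ≤ δ

namespace HasRotatingDerivAt

variable {X Y : ℝ → V3} {ω : V3} {δ ε : ℝ}

theorem const_smul (hX : HasRotatingDerivAt X ω δ t) (a : ℝ) :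
    HasRotatingDerivAt (fun τ => a • X τ) ω (‖a‖ * δ) t := by
  obtain ⟨D, hD, hDδ⟩ := hX
  refine ⟨a • D, ?_, ?_⟩
  · rw [cross3_smul_left, ← smul_add]
    exact hD.const_smul a
  · rw [norm_smul]
    exact mul_le_mul_of_nonneg_left hDδ (norm_nonneg a)

theorem add (hX : HasRotatingDerivAt X ω δ t) (hY : HasRotatingDerivAt Y ω ε t) :
    HasRotatingDerivAt (fun τ => X τ + Y τ) ω (δ + ε) t := by
  obtain ⟨D, hD, hDδ⟩ := hX
  obtain ⟨E, hE, hEε⟩ := hY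
  refine ⟨D + E, ?_, (norm_add_le D E).trans (add_le_add hDδ hEε)⟩
  rw [cross3_add_left, add_add_add_comm]
  exact hD.add hE

theorem norm_deriv_le (hX : HasRotatingDerivAt X ω δ t) {B : ℝ} (hω : ‖ω‖ ≤ B) :
    ‖deriv X t‖ ≤ δ + B * ‖X t‖ := by
  obtain ⟨D, hD, hDδ⟩ := hX
  rw [hD.deriv, add_comm δ]
  refine (norm_add_le _ _).trans (add_le_add ?_ hDδ)
  calc ‖cross3 (X t) ω‖ ≤ ‖X t‖ * ‖ω‖ := norm_cross3_le _ _
    _ ≤ B * ‖X t‖ := by rw [mul_comm]; gcongr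

end HasRotatingDerivAt

theorem hasRotatingDerivAt_cross3_relative {Q : ℝ → M3} {b c : ℝ → V3} {ω₁ ω₂ Ω₁ Ω₂ : V3}
    (hQt : (Q t)ᵀ * Q t = 1) (hQ : HasDerivAt Q (Q t * hat ω₁ - hat ω₂ * Q t) t)
    (hb : HasDerivAt b (cross3 (b t) Ω₂) t) (hc : HasDerivAt c (cross3 (c t) Ω₁) t) :
    HasRotatingDerivAt (fun τ => cross3 (matVec (Q τ)ᵀ (b τ)) (c τ)) ω₁
      (‖b t‖ * ‖c t‖ * (‖Ω₁ - ω₁‖ + ‖Ω₂ - ω₂‖)) t := by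
  refine ⟨cross3 (matVec (Q t)ᵀ (cross3 (b t) (Ω₂ - ω₂))) (c t)
    + cross3 (matVec (Q t)ᵀ (b t)) (cross3 (c t) (Ω₁ - ω₁)), ?_, ?_⟩
  · convert (hasDerivAt_relative_frame hQ hb).cross3 hc using 1
    ext i; fin_cases i <;> simp [cross3] <;> ring
  · calc _ ≤ ‖b t‖ * ‖Ω₂ - ω₂‖ * ‖c t‖ + ‖b t‖ * (‖c t‖ * ‖Ω₁ - ω₁‖) := by
          refine (norm_add_le _ _).trans (add_le_add ?_ ?_)
          · refine (norm_cross3_le _ _).trans ?_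
            rw [norm_matVec_transpose hQt]
            gcongr
            exact norm_cross3_le _ _
          · refine (norm_cross3_le _ _).trans ?_
            rw [norm_matVec_transpose hQt]
            gcongr
            exact norm_cross3_le _ _
      _ = _ := by ring

end Kinematics

theorem error_vector_derivative_bound_general
    (s₁₂ s₁₃ s₂₁ s₂₃ : V3)
    (hs₁₂ : ‖s₁₂‖ = 1) (hs₂₁ : ‖s₂₁‖ = 1)
    (Ω₁ Ω₂ Ωd₁ Ωd₂ : ℝ → V3)
    (R₁ R₂ Qd₁₂ : ℝ → M3)
    (hR₁SO : ∀ t, SO3 (R₁ t)) (hR₂SO : ∀ t, SO3 (R₂ t)) (hQdSO : ∀ t, SO3 (Qd₁₂ t))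
    (hR₁ : ∀ t, HasDerivAt R₁ (R₁ t * hat (Ω₁ t)) t)
    (hR₂ : ∀ t, HasDerivAt R₂ (R₂ t * hat (Ω₂ t)) t)
    (hQd : ∀ t, HasDerivAt Qd₁₂ (Qd₁₂ t * hat (Ωd₁ t) - hat (Ωd₂ t) * Qd₁₂ t) t)
    (Qd₂₁ : ℝ → M3) (hQd₂₁ : ∀ t, Qd₂₁ t = (Qd₁₂ t)ᵀ)
    (b₁₂ b₁₃ b₂₁ b₂₃ b₁₂₃ b₂₁₃ : ℝ → V3)
    (hb₁₂ : ∀ t, b₁₂ t = matVec (R₁ t)ᵀ s₁₂) (hb₁₃ : ∀ t, b₁₃ t = matVec (R₁ t)ᵀ s₁₃)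
    (hb₂₁ : ∀ t, b₂₁ t = matVec (R₂ t)ᵀ s₂₁) (hb₂₃ : ∀ t, b₂₃ t = matVec (R₂ t)ᵀ s₂₃)
    (hb₁₂₃ : ∀ t, b₁₂₃ t = cross3 (b₁₂ t) (b₁₃ t))
    (hb₂₁₃ : ∀ t, b₂₁₃ t = cross3 (b₂₁ t) (b₂₃ t))
    (a₁₂ : ℝ → ℝ) (ha₁₂ : ∀ t, a₁₂ t = ‖b₂₁₃ t‖ * ‖b₁₂₃ t‖)
    (kα kβ : ℝ) (hkα : 0 < kα) (hkβ : 0 < kβ)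
    (e₁₂ : ℝ → V3)
    (he₁₂ : ∀ t, e₁₂ t = kα • cross3 (matVec (Qd₂₁ t) (b₂₁ t)) (b₁₂ t)
        + (kβ / a₁₂ t) • cross3 (matVec (Qd₂₁ t) (b₂₁₃ t)) (b₁₂₃ t))
    (Bd : ℝ) (hBd : ∀ t, ‖Ωd₁ t‖ ≤ Bd) :
    ∀ t, ‖deriv e₁₂ t‖ ≤
      (kα + kβ) * (‖Ω₁ t - Ωd₁ t‖ + ‖Ω₂ t - Ωd₂ t‖) + Bd * ‖e₁₂ t‖ := by
  intro t
  have h₁₂ : HasDerivAt b₁₂ (cross3 (b₁₂ t) (Ω₁ t)) t :=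
    funext hb₁₂ ▸ hasDerivAt_body_frame (hR₁ t) s₁₂
  have h₁₃ : HasDerivAt b₁₃ (cross3 (b₁₃ t) (Ω₁ t)) t :=
    funext hb₁₃ ▸ hasDerivAt_body_frame (hR₁ t) s₁₃
  have h₂₁ : HasDerivAt b₂₁ (cross3 (b₂₁ t) (Ω₂ t)) t :=
    funext hb₂₁ ▸ hasDerivAt_body_frame (hR₂ t) s₂₁
  have h₂₃ : HasDerivAt b₂₃ (cross3 (b₂₃ t) (Ω₂ t)) t :=
    funext hb₂₃ ▸ hasDerivAt_body_frame (hR₂ t) s₂₃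
  have h₁₂₃ : HasDerivAt b₁₂₃ (cross3 (b₁₂₃ t) (Ω₁ t)) t :=
    funext hb₁₂₃ ▸ hasDerivAt_cross3_of_rotating h₁₂ h₁₃
  have h₂₁₃ : HasDerivAt b₂₁₃ (cross3 (b₂₁₃ t) (Ω₂ t)) t :=
    funext hb₂₁₃ ▸ hasDerivAt_cross3_of_rotating h₂₁ h₂₃
  set a := ‖cross3 s₂₁ s₂₃‖ * ‖cross3 s₁₂ s₁₃‖
  have ha : ∀ τ, a₁₂ τ = a := fun τ => by
    rw [ha₁₂, hb₂₁₃, hb₁₂₃, hb₂₁, hb₂₃, hb₁₂, hb₁₃, norm_cross3_matVec_transpose (hR₂SO τ).1,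
      norm_cross3_matVec_transpose (hR₁SO τ).1]
  have hα := hasRotatingDerivAt_cross3_relative (hQdSO t).1 (hQd t) h₂₁ h₁₂
  have hβ := hasRotatingDerivAt_cross3_relative (hQdSO t).1 (hQd t) h₂₁₃ h₁₂₃
  obtain rfl : e₁₂ = fun τ => kα • cross3 (matVec (Qd₁₂ τ)ᵀ (b₂₁ τ)) (b₁₂ τ)
      + (kβ / a) • cross3 (matVec (Qd₁₂ τ)ᵀ (b₂₁₃ τ)) (b₁₂₃ τ) :=
    funext fun τ => by rw [he₁₂, hQd₂₁, ha]
  refine (((hα.const_smul kα).add (hβ.const_smul (kβ / a))).norm_deriv_le (hBd t)).trans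
    (add_le_add ?_ le_rfl)
  have hE : 0 ≤ ‖Ω₁ t - Ωd₁ t‖ + ‖Ω₂ t - Ωd₂ t‖ := by positivity
  have hκ : kβ / a * a ≤ kβ := by
    rcases eq_or_ne a 0 with ha₀ | ha₀
    · simpa [ha₀] using hkβ.le
    · rw [div_mul_cancel₀ _ ha₀]
  rw [← ha₁₂ t, ha t, hb₂₁ t, hb₁₂ t, norm_matVec_transpose (hR₂SO t).1,
    norm_matVec_transpose (hR₁SO t).1, hs₂₁, hs₁₂, Real.norm_of_nonneg hkα.le,
    Real.norm_of_nonneg (by positivity)]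
  nlinarith

/-- bound on the time derivative of the error vector e₁₂. -/
theorem error_vector_derivative_bound
    (s₁₂ s₁₃ s₂₁ s₂₃ : V3)
    (hs₁₂ : ‖s₁₂‖ = 1) (hs₁₃ : ‖s₁₃‖ = 1) (hs₂₁ : ‖s₂₁‖ = 1) (hs₂₃ : ‖s₂₃‖ = 1)
    (hopp : s₁₂ = -s₂₁)
    (s₁₂₃ s₂₁₃ : V3) (hs₁₂₃ : s₁₂₃ = cross3 s₁₂ s₁₃) (hs₂₁₃ : s₂₁₃ = cross3 s₂₁ s₂₃)
    (h₁ : s₁₂₃ ≠ 0) (h₂ : s₂₁₃ ≠ 0)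
    (hnormal : ‖s₂₁₃‖⁻¹ • s₂₁₃ = -(‖s₁₂₃‖⁻¹ • s₁₂₃))
    (Ω₁ Ω₂ Ωd₁ Ωd₂ : ℝ → V3)
    (hΩ₁ : Continuous Ω₁) (hΩ₂ : Continuous Ω₂)
    (hΩd₁ : Continuous Ωd₁) (hΩd₂ : Continuous Ωd₂)
    (R₁ R₂ Qd₁₂ : ℝ → M3)
    (hR₁SO : ∀ t, SO3 (R₁ t)) (hR₂SO : ∀ t, SO3 (R₂ t)) (hQdSO : ∀ t, SO3 (Qd₁₂ t))
    (hR₁ : ∀ t, HasDerivAt R₁ (R₁ t * hat (Ω₁ t)) t)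
    (hR₂ : ∀ t, HasDerivAt R₂ (R₂ t * hat (Ω₂ t)) t)
    (hQd : ∀ t, HasDerivAt Qd₁₂ (Qd₁₂ t * hat (Ωd₁ t) - hat (Ωd₂ t) * Qd₁₂ t) t)
    (Qd₂₁ : ℝ → M3) (hQd₂₁ : ∀ t, Qd₂₁ t = (Qd₁₂ t)ᵀ)
    (b₁₂ b₁₃ b₂₁ b₂₃ b₁₂₃ b₂₁₃ : ℝ → V3)
    (hb₁₂ : ∀ t, b₁₂ t = matVec (R₁ t)ᵀ s₁₂) (hb₁₃ : ∀ t, b₁₃ t = matVec (R₁ t)ᵀ s₁₃)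
    (hb₂₁ : ∀ t, b₂₁ t = matVec (R₂ t)ᵀ s₂₁) (hb₂₃ : ∀ t, b₂₃ t = matVec (R₂ t)ᵀ s₂₃)
    (hb₁₂₃ : ∀ t, b₁₂₃ t = cross3 (b₁₂ t) (b₁₃ t))
    (hb₂₁₃ : ∀ t, b₂₁₃ t = cross3 (b₂₁ t) (b₂₃ t))
    (a₁₂ : ℝ → ℝ) (ha₁₂ : ∀ t, a₁₂ t = ‖b₂₁₃ t‖ * ‖b₁₂₃ t‖)
    (kα kβ : ℝ) (hkα : 0 < kα) (hkβ : 0 < kβ)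
    (e₁₂ : ℝ → V3)
    (he₁₂ : ∀ t, e₁₂ t = kα • cross3 (matVec (Qd₂₁ t) (b₂₁ t)) (b₁₂ t)
        + (kβ / a₁₂ t) • cross3 (matVec (Qd₂₁ t) (b₂₁₃ t)) (b₁₂₃ t))
    (Bd : ℝ) (hBd : ∀ t, ‖Ωd₁ t‖ ≤ Bd) :
    ∀ t, ‖deriv e₁₂ t‖ ≤
      (kα + kβ) * (‖Ω₁ t - Ωd₁ t‖ + ‖Ω₂ t - Ωd₂ t‖) + Bd * ‖e₁₂ t‖ :=
  error_vector_derivative_bound_general s₁₂ s₁₃ s₂₁ s₂₃ hs₁₂ hs₂₁ Ω₁ Ω₂ Ωd₁ Ωd₂ R₁ R₂ Qd₁₂ hR₁SO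
    hR₂SO hQdSO hR₁ hR₂ hQd Qd₂₁ hQd₂₁ b₁₂ b₁₃ b₂₁ b₂₃ b₁₂₃ b₂₁₃ hb₁₂ hb₁₃ hb₂₁ hb₂₃ hb₁₂₃ hb₂₁₃ a₁₂
    ha₁₂ kα kβ hkα hkβ e₁₂ he₁₂ Bd hBd
end
end

section
/- Let g₁, g₂ be positive constants with g₁ ≠ g₂ and let G = diag(g₁, g₂, 0). A rotation matrix P ∈ SO(3) satisfies GP − PᵀG = 0 (equivalently, (GP − PᵀG)^∨ = 0, i.e., P is a critical point of the error function P ↦ tr[G(I−P)]) if and only if P is one of the four matrices I, diag(1,−1,−1), diag(−1,1,−1), diag(−1,−1,1). -/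
noncomputable section
open Matrix

attribute [local instance] Matrix.normedAddCommGroup Matrix.normedSpace

/-! If `G * P = Pᵀ * G` with `P` orthogonal, then `P * G = G * Pᵀ` as well, so `G²` commutes
with `P`. Since `G² = diag(g₁², g₂², 0)` has pairwise distinct entries, `P` is diagonal, and a
diagonal rotation has entries `±1` whose product is `1`. -/

theorem commute_mul_self_of_mul_eq_mul {M : Type*} [Monoid M] {G P Q : M}
    (hPQ : P * Q = 1) (h : G * P = Q * G) : Commute (G * G) P := by
  have hPG : P * G = G * Q :=
    calc P * G = P * (G * P) * Q := by rw [mul_assoc, mul_assoc, hPQ, mul_one]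
      _ = G * Q := by rw [h, ← mul_assoc, hPQ, one_mul]
  calc G * G * P = G * Q * G := by rw [mul_assoc, h, mul_assoc]
    _ = P * G * G := by rw [hPG]
    _ = P * (G * G) := mul_assoc _ _ _

theorem Matrix.isDiag_of_commute_diagonal {n R : Type*} [Fintype n] [DecidableEq n]
    [CommRing R] [NoZeroDivisors R] {d : n → R} (hd : Function.Injective d)
    {A : Matrix n n R} (h : Commute (diagonal d) A) : A.IsDiag := by
  intro i j hij
  have hij' := congrFun (congrFun h.eq i) j
  rw [diagonal_mul, mul_diagonal, ← sub_eq_zero, mul_comm (A i j), ← sub_mul] at hij'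
  exact (mul_eq_zero.mp hij').resolve_left (sub_ne_zero.mpr (hd.ne hij))

theorem vec3_eq_of_mul_self_eq_one_of_prod_eq_one {e : Fin 3 → ℝ} (hsq : ∀ i, e i * e i = 1)
    (hprod : e 0 * e 1 * e 2 = 1) :
    e = ![1, 1, 1] ∨ e = ![1, -1, -1] ∨ e = ![-1, 1, -1] ∨ e = ![-1, -1, 1] := by
  have he : e = ![e 0, e 1, e 2] := by ext i; fin_cases i <;> rfl
  rw [he]
  rcases mul_self_eq_one_iff.mp (hsq 0) with h0 | h0 <;>
    rcases mul_self_eq_one_iff.mp (hsq 1) with h1 | h1 <;>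
    rcases mul_self_eq_one_iff.mp (hsq 2) with h2 | h2 <;>
    simp only [h0, h1, h2] at hprod ⊢ <;> norm_num at hprod <;> simp

theorem SO3.eq_sign_diagonal_of_isDiag {P : M3} (hP : SO3 P) (hdiag : P.IsDiag) :
    P = 1 ∨ P = diagonal ![1, -1, -1] ∨ P = diagonal ![-1, 1, -1] ∨
      P = diagonal ![-1, -1, 1] := by
  obtain ⟨horth, hdet⟩ := hP
  rw [← hdiag.diagonal_diag] at horth hdet ⊢
  rw [diagonal_transpose, diagonal_mul_diagonal, ← diagonal_one,
    diagonal_eq_diagonal_iff] at horth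
  rw [det_diagonal, Fin.prod_univ_three] at hdet
  rcases vec3_eq_of_mul_self_eq_one_of_prod_eq_one horth hdet with h | h | h | h <;> rw [h]
  · left
    rw [← diagonal_one]
    congr 1
    ext i; fin_cases i <;> rfl
  all_goals simp

/-- critical points of P ↦ tr[G(I−P)] on SO(3). -/
theorem critical_points_of_error_function
    (g₁ g₂ : ℝ) (hg₁ : 0 < g₁) (hg₂ : 0 < g₂) (hne : g₁ ≠ g₂)
    (G : M3) (hG : G = Matrix.diagonal ![g₁, g₂, 0])
    (P : M3) (hP : SO3 P) :
    G * P - Pᵀ * G = 0 ↔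
      (P = 1 ∨ P = Matrix.diagonal ![1, -1, -1] ∨
        P = Matrix.diagonal ![-1, 1, -1] ∨ P = Matrix.diagonal ![-1, -1, 1]) := by
  subst hG
  rw [sub_eq_zero]
  constructor
  · intro h
    have hcomm := commute_mul_self_of_mul_eq_mul (mul_eq_one_comm.mp hP.1) h
    rw [diagonal_mul_diagonal] at hcomm
    have hinj : Function.Injective fun i => ![g₁, g₂, 0] i * ![g₁, g₂, 0] i := by
      have h₁₂ : g₁ * g₁ ≠ g₂ * g₂ := fun h => hne ((mul_self_inj hg₁.le hg₂.le).mp h)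
      intro i j hij
      fin_cases i <;> fin_cases j <;> simp [hg₁.ne', hg₂.ne', h₁₂, h₁₂.symm] at hij ⊢
    exact hP.eq_sign_diagonal_of_isDiag (isDiag_of_commute_diagonal hinj hcomm)
  · rintro (rfl | rfl | rfl | rfl)
    · rw [transpose_one, mul_one, one_mul]
    all_goals rw [diagonal_transpose]; exact commute_diagonal _ _
end
end
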